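/- For positive integers m, n: sum_{i=1}^{2n-1} [2n-1 choose i]_q * (-1)^{i-1} (-1;q)_i * q^{mi}/(1-q^i)^m = sum_{i=1}^n 2 q^{2i-1}/(1-q^{2i-1}) * sum over chains 2i-1 <= i_2 <= ... <= i_m <= 2n-1 of q^{i_2+...+i_m}/((1-q^{i_2})...(1-q^{i_m})). -/

import Mathlib

open Finset

variable {F : Type*} [Field F]

/-- `(q;q)_n = (1-q)(1-q^2)...(1-q^n)` -/
def qfac (q : F) (n : ℕ) : F := ∏ j ∈ Finset.range n, (1 - q ^ (j + 1))

/-- `(z;q)_k = (1-z)(1-zq)...(1-zq^{k-1})` -/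
def qpoch (z q : F) (k : ℕ) : F := ∏ j ∈ Finset.range k, (1 - z * q ^ j)

/-- Gaussian binomial coefficient `[n choose k]_q` -/
def qbinom (q : F) (n k : ℕ) : F := qfac q n / (qfac q k * qfac q (n - k))

/-- Sum over weakly increasing `m`-tuples `lo ≤ i_1 ≤ ... ≤ i_m ≤ n` of
`∏_j q^{i_j}/(1-q^{i_j})` (equal to `1` when `m = 0`). -/
def chainSum (q : F) (lo n m : ℕ) : F :=
  ∑ c ∈ Finset.univ.filter (fun c : Fin m → Fin (n + 1) =>
      (∀ j k : Fin m, j ≤ k → c j ≤ c k) ∧ ∀ j, lo ≤ (c j : ℕ)),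
    ∏ j, q ^ (c j : ℕ) / (1 - q ^ (c j : ℕ))

/-- Complete homogeneous symmetric function `h_m` of the variables
`x lo, x (lo+1), ..., x n`. -/
def hSum {R : Type*} [CommRing R] (x : ℕ → R) (lo n m : ℕ) : R :=
  ∑ c ∈ Finset.univ.filter (fun c : Fin m → Fin (n + 1) =>
      (∀ j k : Fin m, j ≤ k → c j ≤ c k) ∧ ∀ j, lo ≤ (c j : ℕ)),
    ∏ j, x (c j : ℕ)
section P1
variable {q : F} (hq : ∀ i : ℕ, 1 ≤ i → q ^ i ≠ 1)
include hq

lemma one_sub_ne {k : ℕ} (hk : 1 ≤ k) : 1 - q ^ k ≠ 0 := by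
  intro h
  exact hq k hk (sub_eq_zero.mp h).symm

lemma qfac_ne (n : ℕ) : qfac q n ≠ 0 := by
  rw [qfac, Finset.prod_ne_zero_iff]
  intro j _
  exact one_sub_ne hq (by omega)

omit hq in
lemma qfac_succ (n : ℕ) : qfac q (n + 1) = qfac q n * (1 - q ^ (n + 1)) := by
  rw [qfac, Finset.prod_range_succ, qfac]

lemma qbinom_zero (n : ℕ) : qbinom q n 0 = 1 := by
  have h0 : qfac q 0 = 1 := by simp [qfac]
  rw [qbinom, Nat.sub_zero, h0, one_mul, div_self (qfac_ne hq n)]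

lemma qbinom_self (n : ℕ) : qbinom q n n = 1 := by
  have : qfac q (n - n) = 1 := by simp [qfac]
  rw [qbinom, this, mul_one, div_self (qfac_ne hq n)]

lemma qbinom_pascal {i k : ℕ} (h1 : 1 ≤ k) (h2 : k ≤ i) :
    qbinom q (i + 1) k = qbinom q i k + q ^ (i + 1 - k) * qbinom q i (k - 1) := by
  obtain ⟨l, rfl⟩ : ∃ l, k = l + 1 := ⟨k - 1, by omega⟩
  obtain ⟨j, rfl⟩ : ∃ j, i = l + 1 + j := ⟨i - (l + 1), by omega⟩
  have e1 : l + 1 + j + 1 - (l + 1) = j + 1 := by omega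
  have e2 : l + 1 + j - (l + 1) = j := by omega
  have e3 : l + 1 + j - l = j + 1 := by omega
  have e4 : l + 1 - 1 = l := by omega
  rw [qbinom, qbinom, qbinom, e1, e2, e4, e3]
  have f1 : qfac q (l + 1 + j + 1) = qfac q (l + 1 + j) * (1 - q ^ (l + j + 2)) := by
    have : l + 1 + j + 1 = (l + 1 + j) + 1 := by omega
    rw [this, qfac_succ]
    ring_nf
  have f2 : qfac q (l + 1) = qfac q l * (1 - q ^ (l + 1)) := qfac_succ l
  have f3 : qfac q (j + 1) = qfac q j * (1 - q ^ (j + 1)) := qfac_succ j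
  rw [f1, f2, f3]
  have n1 := qfac_ne hq (l + 1 + j)
  have n2 := qfac_ne hq l
  have n3 := qfac_ne hq j
  have n4 := one_sub_ne hq (show 1 ≤ l + 1 by omega)
  have n5 := one_sub_ne hq (show 1 ≤ j + 1 by omega)
  field_simp
  ring

lemma qbt (z : F) (i : ℕ) :
    ∏ t ∈ Finset.range i, (1 + z * q ^ t)
      = ∑ k ∈ Finset.range (i + 1), qbinom q i k * q ^ (Nat.choose k 2) * z ^ k := by
  induction i with
  | zero => simp [qbinom_zero hq]
  | succ i ih =>
    rw [Finset.prod_range_succ, ih, mul_one_add, Finset.sum_mul,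
      Finset.sum_range_succ (f := fun k => qbinom q (i+1) k * q ^ (Nat.choose k 2) * z ^ k),
      Finset.sum_range_succ' (f := fun k => qbinom q (i+1) k * q ^ (Nat.choose k 2) * z ^ k),
      Finset.sum_range_succ' (f := fun k => qbinom q i k * q ^ (Nat.choose k 2) * z ^ k),
      Finset.sum_range_succ (f := fun k => qbinom q i k * q ^ (Nat.choose k 2) * z ^ k * (z * q ^ i))]
    have h0 : qbinom q (i+1) 0 = qbinom q i 0 := by rw [qbinom_zero hq, qbinom_zero hq]
    have htop : qbinom q (i+1) (i+1) * q ^ Nat.choose (i+1) 2 * z ^ (i+1)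
        = qbinom q i i * q ^ Nat.choose i 2 * z ^ i * (z * q ^ i) := by
      rw [qbinom_self hq, qbinom_self hq, Nat.choose_succ_succ, Nat.choose_one_right, pow_add,
        pow_succ]
      ring
    have hmid : ∀ k ∈ Finset.range i,
        qbinom q (i+1) (k+1) * q ^ Nat.choose (k+1) 2 * z ^ (k+1)
          = qbinom q i (k+1) * q ^ Nat.choose (k+1) 2 * z ^ (k+1)
            + qbinom q i k * q ^ Nat.choose k 2 * z ^ k * (z * q ^ i) := by
      intro k hk
      rw [Finset.mem_range] at hk
      rw [qbinom_pascal hq (by omega) (by omega)]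
      have e : i + 1 - (k+1) = i - k := by omega
      have e2 : k + 1 - 1 = k := by omega
      rw [e, e2, Nat.choose_succ_succ, Nat.choose_one_right]
      have e3 : q ^ (i - k) * q ^ (k + Nat.choose k 2) = q ^ (Nat.choose k 2) * q ^ i := by
        rw [← pow_add, ← pow_add]; congr 1; omega
      rw [pow_add]
      linear_combination qbinom q i k * z ^ k * z * e3
    have hs : ∑ k ∈ Finset.range i, qbinom q (i+1) (k+1) * q ^ Nat.choose (k+1) 2 * z ^ (k+1)
        = ∑ k ∈ Finset.range i, (qbinom q i (k+1) * q ^ Nat.choose (k+1) 2 * z ^ (k+1)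
            + qbinom q i k * q ^ Nat.choose k 2 * z ^ k * (z * q ^ i)) :=
      Finset.sum_congr rfl hmid
    rw [hs, Finset.sum_add_distrib, htop, h0]
    ring

lemma parity_sum {i : ℕ} (hi : 1 ≤ i) (r : ℕ) :
    2 * ∑ k ∈ (Finset.range (i+1)).filter (fun k => k % 2 = r % 2),
        qbinom q i k * q ^ (Nat.choose k 2)
      = ∏ t ∈ Finset.range i, (1 + q ^ t) := by
  have h1 : ∑ k ∈ Finset.range (i + 1), qbinom q i k * q ^ (Nat.choose k 2)
      = ∏ t ∈ Finset.range i, (1 + q ^ t) := by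
    have := qbt hq 1 i
    simp only [one_pow, mul_one, one_mul] at this
    rw [this]
  have h2 : ∑ k ∈ Finset.range (i + 1), qbinom q i k * q ^ (Nat.choose k 2) * (-1 : F) ^ k
      = 0 := by
    have := qbt hq (-1) i
    rw [← this]
    apply Finset.prod_eq_zero (Finset.mem_range.mpr (show 0 < i by omega))
    simp
  have hfc : (Finset.range (i+1)).filter (fun k => ¬ k % 2 = 0)
      = (Finset.range (i+1)).filter (fun k => k % 2 = 1) := by
    apply Finset.filter_congr
    intros
    omega
  have hsplit1 := Finset.sum_filter_add_sum_filter_not (Finset.range (i+1))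
    (fun k => k % 2 = 0) (fun k => qbinom q i k * q ^ (Nat.choose k 2))
  have hsplit2 := Finset.sum_filter_add_sum_filter_not (Finset.range (i+1))
    (fun k => k % 2 = 0) (fun k => qbinom q i k * q ^ (Nat.choose k 2) * (-1 : F) ^ k)
  rw [hfc] at hsplit1 hsplit2
  have hev : ∑ k ∈ (Finset.range (i+1)).filter (fun k => k % 2 = 0),
      qbinom q i k * q ^ (Nat.choose k 2) * (-1 : F) ^ k
      = ∑ k ∈ (Finset.range (i+1)).filter (fun k => k % 2 = 0),
        qbinom q i k * q ^ (Nat.choose k 2) := by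
    apply Finset.sum_congr rfl
    intro k hk
    rw [Finset.mem_filter] at hk
    rw [(Nat.even_iff.mpr hk.2).neg_one_pow, mul_one]
  have hod : ∑ k ∈ (Finset.range (i+1)).filter (fun k => k % 2 = 1),
      qbinom q i k * q ^ (Nat.choose k 2) * (-1 : F) ^ k
      = - ∑ k ∈ (Finset.range (i+1)).filter (fun k => k % 2 = 1),
        qbinom q i k * q ^ (Nat.choose k 2) := by
    rw [← Finset.sum_neg_distrib]
    apply Finset.sum_congr rfl
    intro k hk
    rw [Finset.mem_filter] at hk
    rw [(Nat.odd_iff.mpr hk.2).neg_one_pow]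
    ring
  rw [hev, hod] at hsplit2
  rcases Nat.mod_two_eq_zero_or_one r with hr | hr <;> rw [hr]
  · linear_combination hsplit1 + hsplit2 + h1 + h2
  · linear_combination hsplit1 - hsplit2 + h1 - h2

omit hq in
lemma qbinom_symm {n k : ℕ} (hk : k ≤ n) : qbinom q n (n - k) = qbinom q n k := by
  rw [qbinom, qbinom, Nat.sub_sub_self hk, mul_comm]

lemma heart {i : ℕ} (hi : 1 ≤ i) :
    2 * ∑ j ∈ (Finset.Icc 1 i).filter (fun j => j % 2 = 1),
        q ^ (i + Nat.choose (i - j) 2) * qbinom q i j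
      = (∏ t ∈ Finset.range i, (1 + q ^ t)) * q ^ i := by
  rw [← parity_sum hq hi (i+1), mul_assoc, Finset.sum_mul]
  congr 1
  apply Finset.sum_nbij' (i := fun j => i - j) (j := fun k => i - k)
  · intro a ha
    simp only [Finset.mem_filter, Finset.mem_Icc] at ha
    simp only [Finset.mem_filter, Finset.mem_range]
    omega
  · intro a ha
    simp only [Finset.mem_filter, Finset.mem_range] at ha
    simp only [Finset.mem_filter, Finset.mem_Icc]
    omega
  · intro a ha
    simp only [Finset.mem_filter, Finset.mem_Icc] at ha
    omega
  · intro a ha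
    simp only [Finset.mem_filter, Finset.mem_range] at ha
    omega
  · intro a ha
    simp only [Finset.mem_filter, Finset.mem_Icc] at ha
    have hsymm : qbinom q i (i - a) = qbinom q i a := by
      nth_rewrite 2 [← Nat.sub_sub_self (show a ≤ i by omega)]
      exact (qbinom_symm (show i - a ≤ i by omega)).symm
    rw [hsymm, pow_add]
    ring

end P1

def xq (q : F) (k : ℕ) : F := q ^ k / (1 - q ^ k)

def Aco (q : F) (N i l : ℕ) : F :=
  ∏ k ∈ (Finset.Icc l N).erase i, (xq q i / (xq q i - xq q k))

section P2
variable {q : F} (hq : ∀ i : ℕ, 1 ≤ i → q ^ i ≠ 1) (hq0 : q ≠ 0)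
include hq hq0

lemma pow_ne_pow {i k : ℕ} (hik : i ≠ k) : q ^ i ≠ q ^ k := by
  have key : ∀ a b : ℕ, a < b → q ^ b ≠ q ^ a := by
    intro a b hab h
    have h2 : q ^ a * q ^ (b - a) = q ^ a * 1 := by
      rw [mul_one, ← pow_add, show a + (b - a) = b from by omega, h]
    exact hq (b - a) (by omega) (mul_left_cancel₀ (pow_ne_zero a hq0) h2)
  rcases Nat.lt_or_ge i k with h | h
  · exact (key i k h).symm
  · exact key k i (by omega)

omit hq0 in
lemma xq_ne_zero' {k : ℕ} (hk : 1 ≤ k) (hq0 : q ≠ 0) : xq q k ≠ 0 :=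
  div_ne_zero (pow_ne_zero _ hq0) (one_sub_ne hq hk)

omit hq0 in
lemma xq_sub_eq {i k : ℕ} (hi : 1 ≤ i) (hk : 1 ≤ k) :
    xq q i - xq q k = (q ^ i - q ^ k) / ((1 - q ^ i) * (1 - q ^ k)) := by
  rw [xq, xq, div_sub_div _ _ (one_sub_ne hq hi) (one_sub_ne hq hk)]
  congr 1
  ring

lemma xq_sub_ne {i k : ℕ} (hi : 1 ≤ i) (hk : 1 ≤ k) (hik : i ≠ k) :
    xq q i - xq q k ≠ 0 := by
  rw [xq_sub_eq hq hi hk]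
  exact div_ne_zero (sub_ne_zero.mpr (pow_ne_pow hq hq0 hik))
    (mul_ne_zero (one_sub_ne hq hi) (one_sub_ne hq hk))

omit hq hq0 in
lemma hdiv {a b c d : F} (hb : b ≠ 0) (hd : d ≠ 0) (hc : c ≠ 0) :
    (a / b) / (c / (b * d)) = a * d / c := by
  field_simp

lemma factor_lt {i k : ℕ} (hk : 1 ≤ k) (hki : k < i) :
    xq q i / (xq q i - xq q k) = -(q ^ (i - k) * (1 - q ^ k) / (1 - q ^ (i - k))) := by
  obtain ⟨d, rfl⟩ : ∃ d, i = k + d := ⟨i - k, by omega⟩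
  have hd : 1 ≤ d := by omega
  have e : k + d - k = d := by omega
  rw [e]
  have hc : q ^ (k + d) - q ^ k ≠ 0 := sub_ne_zero.mpr (pow_ne_pow hq hq0 (by omega))
  rw [xq_sub_eq hq (show 1 ≤ k + d by omega) hk]
  simp only [xq]
  rw [hdiv (one_sub_ne hq (show 1 ≤ k + d by omega)) (one_sub_ne hq hk) hc,
    show q ^ (k + d) * (1 - q ^ k) = q ^ k * (q ^ d * (1 - q ^ k)) from by rw [pow_add]; ring,
    show q ^ (k + d) - q ^ k = q ^ k * -(1 - q ^ d) from by rw [pow_add]; ring,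
    mul_div_mul_left _ _ (pow_ne_zero k hq0), div_neg]

lemma factor_gt {i k : ℕ} (hi : 1 ≤ i) (hik : i < k) :
    xq q i / (xq q i - xq q k) = (1 - q ^ k) / (1 - q ^ (k - i)) := by
  obtain ⟨d, rfl⟩ : ∃ d, k = i + d := ⟨k - i, by omega⟩
  have hd : 1 ≤ d := by omega
  have e : i + d - i = d := by omega
  rw [e]
  have hc : q ^ i - q ^ (i + d) ≠ 0 := sub_ne_zero.mpr (pow_ne_pow hq hq0 (by omega))
  rw [xq_sub_eq hq hi (show 1 ≤ i + d by omega)]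
  simp only [xq]
  rw [hdiv (one_sub_ne hq hi) (one_sub_ne hq (show 1 ≤ i + d by omega)) hc,
    show q ^ i - q ^ (i + d) = q ^ i * (1 - q ^ d) from by rw [pow_add]; ring,
    mul_div_mul_left _ _ (pow_ne_zero i hq0)]

omit hq hq0 in
lemma inv_factor {a b : F} (ha : a ≠ 0) (hb : b ≠ 0) (hab' : a - b ≠ 0) :
    (a⁻¹ - b⁻¹)⁻¹ * (0 - b⁻¹) = a / (a - b) := by
  rw [inv_sub_inv ha hb, inv_div, zero_sub, mul_neg, div_mul_eq_mul_div,
    mul_inv_cancel_right₀ hb, show a - b = -(b - a) from by ring, div_neg]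

lemma sumA {l N : ℕ} (h1 : 1 ≤ l) (h2 : l ≤ N) :
    ∑ i ∈ Finset.Icc l N, Aco q N i l = 1 := by
  classical
  set v : ℕ → F := fun k => (xq q k)⁻¹ with hv
  have hinj : Set.InjOn v (Finset.Icc l N) := by
    intro a ha b hb hab
    by_contra hne
    rw [Finset.coe_Icc, Set.mem_Icc] at ha hb
    exact xq_sub_ne hq hq0 (by omega) (by omega) hne
      (sub_eq_zero.mpr (inv_injective hab))
  have hnem : (Finset.Icc l N).Nonempty := ⟨l, by simp [Finset.mem_Icc]; omega⟩
  have hs := Lagrange.sum_basis hinj hnem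
  have he := congrArg (Polynomial.eval (0 : F)) hs
  rw [Polynomial.eval_finset_sum, Polynomial.eval_one] at he
  rw [← he]
  apply Finset.sum_congr rfl
  intro i hi
  rw [Finset.mem_Icc] at hi
  rw [Lagrange.basis, Polynomial.eval_prod, Aco]
  apply Finset.prod_congr rfl
  intro k hk
  rw [Finset.mem_erase, Finset.mem_Icc] at hk
  rw [Lagrange.basisDivisor, Polynomial.eval_mul, Polynomial.eval_C, Polynomial.eval_sub,
    Polynomial.eval_X, Polynomial.eval_C]
  exact (inv_factor (xq_ne_zero' hq (by omega) hq0) (xq_ne_zero' hq (by omega) hq0)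
    (xq_sub_ne hq hq0 (by omega) (by omega) (Ne.symm hk.1))).symm

omit hq hq0 in
lemma Aco_step {N i l : ℕ} (hl : l < i) (hiN : i ≤ N) :
    Aco q N i l = xq q i / (xq q i - xq q l) * Aco q N i (l + 1) := by
  have hset : (Finset.Icc l N).erase i = insert l ((Finset.Icc (l + 1) N).erase i) := by
    ext a
    simp only [Finset.mem_erase, Finset.mem_Icc, Finset.mem_insert]
    omega
  rw [Aco, hset, Finset.prod_insert, ← Aco]
  simp only [Finset.mem_erase, Finset.mem_Icc]
  omega

lemma tele {N i : ℕ} (hiN : i ≤ N) (hi1 : 1 ≤ i) :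
    ∀ d l, i - l ≤ d → 1 ≤ l → l ≤ i →
      ∑ k ∈ Finset.Icc l i, xq q k * Aco q N i k = Aco q N i l * xq q i := by
  intro d
  induction d with
  | zero =>
    intro l hd h1 h2
    have : l = i := by omega
    subst this
    rw [Finset.Icc_self, Finset.sum_singleton, mul_comm]
  | succ d ih =>
    intro l hd h1 h2
    rcases eq_or_lt_of_le h2 with he | hlt
    · subst he
      rw [Finset.Icc_self, Finset.sum_singleton, mul_comm]
    · have hset : Finset.Icc l i = insert l (Finset.Icc (l + 1) i) := by
        ext a
        simp only [Finset.mem_Icc, Finset.mem_insert]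
        omega
      rw [hset, Finset.sum_insert (by simp [Finset.mem_Icc]),
        ih (l + 1) (by omega) (by omega) (by omega),
        Aco_step hlt hiN]
      have hsub := xq_sub_ne hq hq0 hi1 h1 (by omega)
      field_simp
      ring

end P2

lemma chainSum_zero (q : F) (lo n : ℕ) : chainSum q lo n 0 = 1 := by
  rw [chainSum]
  rw [Finset.filter_true_of_mem (fun c _ => ⟨fun j => j.elim0, fun j => j.elim0⟩)]
  simp

lemma cons_cond {m n lo : ℕ} (a : Fin (n + 1)) (t : Fin m → Fin (n + 1)) :
    ((∀ j k : Fin (m + 1), j ≤ k →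
          (Fin.cons a t : Fin (m + 1) → Fin (n + 1)) j ≤ (Fin.cons a t : Fin (m + 1) → Fin (n + 1)) k)
        ∧ ∀ j, lo ≤ (((Fin.cons a t : Fin (m + 1) → Fin (n + 1)) j : Fin (n + 1)) : ℕ))
      ↔ (lo ≤ (a : ℕ)
          ∧ ((∀ j k : Fin m, j ≤ k → t j ≤ t k) ∧ ∀ j, (a : ℕ) ≤ ((t j : Fin (n + 1)) : ℕ))) := by
  constructor
  · rintro ⟨h1, h2⟩
    refine ⟨by simpa using h2 0, fun j k hjk => ?_, fun j => ?_⟩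
    · have := h1 j.succ k.succ (by rwa [Fin.succ_le_succ_iff])
      simpa using this
    · have := h1 0 j.succ (Fin.zero_le _)
      simp only [Fin.cons_zero, Fin.cons_succ] at this
      exact Fin.le_def.mp this
  · rintro ⟨h0, h1, h2⟩
    constructor
    · intro j k hjk
      induction j using Fin.cases with
      | zero =>
        induction k using Fin.cases with
        | zero => exact le_refl _
        | succ k =>
          simp only [Fin.cons_zero, Fin.cons_succ]
          exact Fin.le_def.mpr (h2 k)
      | succ j =>
        induction k using Fin.cases with
        | zero =>
          exact absurd (Fin.le_def.mp hjk) (by simp)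
        | succ k =>
          simp only [Fin.cons_succ]
          exact h1 j k (by rwa [Fin.succ_le_succ_iff] at hjk)
    · intro j
      induction j using Fin.cases with
      | zero => simpa using h0
      | succ j =>
        simp only [Fin.cons_succ]
        exact le_trans h0 (h2 j)

lemma chainSum_succ (q : F) (lo n m : ℕ) :
    chainSum q lo n (m + 1) = ∑ k ∈ Finset.Icc lo n, xq q k * chainSum q k n m := by
  classical
  rw [chainSum, Finset.sum_filter, ← Equiv.sum_comp (Fin.consEquiv fun _ => Fin (n + 1)),
    Fintype.sum_prod_type]
  have hinner : ∀ a : Fin (n + 1),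
      (∑ t : Fin m → Fin (n + 1),
        if ((∀ j k : Fin (m + 1), j ≤ k →
              ((Fin.consEquiv fun _ => Fin (n + 1)) (a, t)) j
                ≤ ((Fin.consEquiv fun _ => Fin (n + 1)) (a, t)) k)
            ∧ ∀ j, lo ≤ ((((Fin.consEquiv fun _ => Fin (n + 1)) (a, t)) j : Fin (n + 1)) : ℕ)) then
          ∏ j, q ^ ((((Fin.consEquiv fun _ => Fin (n + 1)) (a, t)) j : Fin (n + 1)) : ℕ)
            / (1 - q ^ ((((Fin.consEquiv fun _ => Fin (n + 1)) (a, t)) j : Fin (n + 1)) : ℕ))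
        else 0)
      = if lo ≤ (a : ℕ) then xq q (a : ℕ) * chainSum q (a : ℕ) n m else 0 := by
    intro a
    have hce : ∀ t : Fin m → Fin (n + 1),
        ((Fin.consEquiv fun _ => Fin (n + 1)) (a, t)) = Fin.cons a t := fun t => rfl
    simp only [hce]
    by_cases ha : lo ≤ (a : ℕ)
    · rw [if_pos ha]
      rw [chainSum, Finset.sum_filter, Finset.mul_sum]
      apply Finset.sum_congr rfl
      intro t _
      simp only [cons_cond, ha, true_and]
      by_cases hc : (∀ j k : Fin m, j ≤ k → t j ≤ t k) ∧ ∀ j, (a : ℕ) ≤ ((t j : Fin (n + 1)) : ℕ)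
      · rw [if_pos hc, if_pos hc, Fin.prod_univ_succ]
        simp only [Fin.cons_zero, Fin.cons_succ]
        rw [xq]
      · rw [if_neg hc, if_neg hc, mul_zero]
    · rw [if_neg ha]
      apply Finset.sum_eq_zero
      intro t _
      rw [if_neg]
      rw [cons_cond]
      tauto
  rw [Finset.sum_congr rfl (fun a _ => hinner a)]
  rw [Fin.sum_univ_eq_sum_range (fun k => if lo ≤ k then xq q k * chainSum q k n m else 0) (n + 1)]
  rw [← Finset.sum_filter]
  apply Finset.sum_congr
  · ext a
    simp only [Finset.mem_filter, Finset.mem_range, Finset.mem_Icc]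
    omega
  · intros; rfl

section P4
variable {q : F} (hq : ∀ i : ℕ, 1 ≤ i → q ^ i ≠ 1) (hq0 : q ≠ 0)
include hq hq0

omit hq hq0 in
lemma qfac_Icc (q : F) (n : ℕ) : qfac q n = ∏ k ∈ Finset.Icc 1 n, (1 - q ^ k) := by
  induction n with
  | zero => simp [qfac]
  | succ n ih =>
    rw [qfac_succ, ih,
      show Finset.Icc 1 (n + 1) = insert (n + 1) (Finset.Icc 1 n) from by
        ext a; simp only [Finset.mem_Icc, Finset.mem_insert]; omega,
      Finset.prod_insert (by simp)]
    ring

omit hq hq0 in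
lemma prod_Icc_split (a b : ℕ) (h1 : 1 ≤ a) (h2 : a ≤ b + 1) (f : ℕ → F) :
    (∏ k ∈ Finset.Icc 1 (a - 1), f k) * ∏ k ∈ Finset.Icc a b, f k
      = ∏ k ∈ Finset.Icc 1 b, f k := by
  rw [← Finset.prod_union (by rw [Finset.disjoint_left]; intro c; simp only [Finset.mem_Icc]; omega)]
  apply Finset.prod_congr _ (fun _ _ => rfl)
  ext c
  simp only [Finset.mem_union, Finset.mem_Icc]
  omega

omit hq hq0 in
lemma prod_shift (i N : ℕ) (f : ℕ → F) :
    ∏ k ∈ Finset.Icc (i + 1) N, f (k - i) = ∏ r ∈ Finset.Icc 1 (N - i), f r := by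
  apply Finset.prod_nbij' (i := fun k => k - i) (j := fun r => r + i) <;>
    intros <;> simp_all only [Finset.mem_Icc] <;> omega

omit hq hq0 in
lemma prod_reflect (j i : ℕ) (hj : 1 ≤ j) (f : ℕ → F) :
    ∏ k ∈ Finset.Icc j (i - 1), f (i - k) = ∏ r ∈ Finset.Icc 1 (i - j), f r := by
  apply Finset.prod_nbij' (i := fun k => i - k) (j := fun r => i - r) <;>
    intros <;> simp_all only [Finset.mem_Icc] <;> omega

omit hq hq0 in
lemma gauss (n : ℕ) : ∑ r ∈ Finset.Icc 1 n, r = Nat.choose n 2 + n := by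
  induction n with
  | zero => simp
  | succ n ih =>
    rw [show Finset.Icc 1 (n + 1) = insert (n + 1) (Finset.Icc 1 n) from by
        ext a; simp only [Finset.mem_Icc, Finset.mem_insert]; omega,
      Finset.sum_insert (by simp), ih]
    have hc : Nat.choose (n + 1) 2 = Nat.choose n 2 + n := by
      rw [Nat.choose_succ_succ, Nat.choose_one_right]
      have h : n.choose (Nat.succ 1) = n.choose 2 := rfl
      omega
    omega

omit hq hq0 in
lemma sum_reflect (j i : ℕ) (hj : 1 ≤ j) :
    ∑ k ∈ Finset.Icc j (i - 1), (i - k) = Nat.choose (i - j) 2 + (i - j) := by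
  rw [← gauss]
  apply Finset.sum_nbij' (i := fun k => i - k) (j := fun r => i - r) <;>
    intros <;> simp_all only [Finset.mem_Icc] <;> omega

lemma Aco_closed {N i j : ℕ} (hj : 1 ≤ j) (hji : j ≤ i) (hiN : i ≤ N) :
    Aco q N i j = (-1 : F) ^ (i - j) * q ^ (Nat.choose (i - j) 2 + (i - j))
      * (qfac q (i - 1) / (qfac q (j - 1) * qfac q (i - j))) * qbinom q N i := by
  have hi1 : 1 ≤ i := le_trans hj hji
  rw [Aco,
    show (Finset.Icc j N).erase i = Finset.Icc j (i - 1) ∪ Finset.Icc (i + 1) N from by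
      ext a; simp only [Finset.mem_erase, Finset.mem_Icc, Finset.mem_union]; omega,
    Finset.prod_union (by rw [Finset.disjoint_left]; intro c; simp only [Finset.mem_Icc]; omega)]
  have hleft : ∏ k ∈ Finset.Icc j (i - 1), (xq q i / (xq q i - xq q k))
      = (-1 : F) ^ (i - j) * q ^ (Nat.choose (i - j) 2 + (i - j))
          * (qfac q (i - 1) / qfac q (j - 1)) * (qfac q (i - j))⁻¹ := by
    have hstep : ∏ k ∈ Finset.Icc j (i - 1), (xq q i / (xq q i - xq q k))
        = ∏ k ∈ Finset.Icc j (i - 1),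
            ((-1) * (q ^ (i - k) * ((1 - q ^ k) * (1 - q ^ (i - k))⁻¹))) := by
      apply Finset.prod_congr rfl
      intro k hk
      rw [Finset.mem_Icc] at hk
      rw [factor_lt hq hq0 (by omega) (by omega), div_eq_mul_inv]
      ring
    rw [hstep]
    rw [Finset.prod_mul_distrib, Finset.prod_mul_distrib, Finset.prod_mul_distrib,
      Finset.prod_const, Nat.card_Icc, Finset.prod_pow_eq_pow_sum, sum_reflect j i hj,
      Finset.prod_inv_distrib, prod_reflect j i hj (fun r => 1 - q ^ r), ← qfac_Icc]
    have hsplit := prod_Icc_split j (i - 1) hj (by omega) (fun k => 1 - q ^ k)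
    rw [← qfac_Icc, ← qfac_Icc] at hsplit
    have : ∏ k ∈ Finset.Icc j (i - 1), (1 - q ^ k) = qfac q (i - 1) / qfac q (j - 1) := by
      rw [eq_div_iff (qfac_ne hq (j - 1)), mul_comm]
      exact hsplit
    rw [this, show i - 1 + 1 - j = i - j from by omega]
    ring
  have hright : ∏ k ∈ Finset.Icc (i + 1) N, (xq q i / (xq q i - xq q k))
      = (qfac q N / qfac q i) * (qfac q (N - i))⁻¹ := by
    have hstep : ∏ k ∈ Finset.Icc (i + 1) N, (xq q i / (xq q i - xq q k))
        = ∏ k ∈ Finset.Icc (i + 1) N, ((1 - q ^ k) * (1 - q ^ (k - i))⁻¹) := by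
      apply Finset.prod_congr rfl
      intro k hk
      rw [Finset.mem_Icc] at hk
      rw [factor_gt hq hq0 (by omega) (by omega), div_eq_mul_inv]
    rw [hstep]
    rw [Finset.prod_mul_distrib, Finset.prod_inv_distrib,
      show (∏ k ∈ Finset.Icc (i + 1) N, (1 - q ^ (k - i)))
          = ∏ r ∈ Finset.Icc 1 (N - i), (1 - q ^ r) from prod_shift i N (fun r => 1 - q ^ r),
      ← qfac_Icc]
    have hsplit := prod_Icc_split (i + 1) N (by omega) (by omega) (fun k => 1 - q ^ k)
    rw [← qfac_Icc] at hsplit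
    rw [show i + 1 - 1 = i from by omega, ← qfac_Icc] at hsplit
    have : ∏ k ∈ Finset.Icc (i + 1) N, (1 - q ^ k) = qfac q N / qfac q i := by
      rw [eq_div_iff (qfac_ne hq i), mul_comm]
      exact hsplit
    rw [this]
  rw [hleft, hright, qbinom]
  have n1 := qfac_ne hq (i - 1)
  have n2 := qfac_ne hq (j - 1)
  have n3 := qfac_ne hq (i - j)
  have n4 := qfac_ne hq N
  have n5 := qfac_ne hq i
  have n6 := qfac_ne hq (N - i)
  field_simp

end P4

section P5
variable {q : F} (hq : ∀ i : ℕ, 1 ≤ i → q ^ i ≠ 1) (hq0 : q ≠ 0)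
include hq hq0

omit hq hq0 in
lemma neg_one_pow_congr' {a b : ℕ} (h : a % 2 = b % 2) : (-1 : F) ^ a = (-1 : F) ^ b := by
  conv_lhs => rw [← Nat.div_add_mod a 2]
  conv_rhs => rw [← Nat.div_add_mod b 2]
  rw [pow_add, pow_add, pow_mul, pow_mul, neg_one_sq, one_pow, one_pow, h]

lemma PT {N i j : ℕ} (hj1 : 1 ≤ j) (hjodd : j % 2 = 1) (hji : j ≤ i) (hiN : i ≤ N) :
    q ^ i * (2 * (xq q j * Aco q N i j))
      = (-1 : F) ^ (i + 1) * qbinom q N i * xq q i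
          * (2 * (q ^ (i + Nat.choose (i - j) 2) * qbinom q i j)) := by
  rw [Aco_closed hq hq0 hj1 hji hiN,
    show (-1 : F) ^ (i + 1) = (-1 : F) ^ (i - j) from neg_one_pow_congr' (by omega)]
  obtain ⟨d, rfl⟩ : ∃ d, i = j + d := ⟨i - j, by omega⟩
  obtain ⟨j', rfl⟩ : ∃ j', j = j' + 1 := ⟨j - 1, by omega⟩
  simp only [show j' + 1 + d - (j' + 1) = d from by omega,
    show j' + 1 - 1 = j' from by omega,
    show j' + 1 + d - 1 = j' + d from by omega]
  rw [show qbinom q (j' + 1 + d) (j' + 1)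
      = qfac q (j' + 1 + d) / (qfac q (j' + 1) * qfac q d) from by
    rw [qbinom, show j' + 1 + d - (j' + 1) = d from by omega]]
  rw [show qfac q (j' + 1 + d) = qfac q (j' + d) * (1 - q ^ (j' + d + 1)) from by
      rw [show j' + 1 + d = (j' + d) + 1 from by omega, qfac_succ],
    qfac_succ j', xq, xq]
  have n1 := one_sub_ne hq (show 1 ≤ j' + 1 by omega)
  have n2 := one_sub_ne hq (show 1 ≤ j' + d + 1 by omega)
  have n3 := qfac_ne hq j'
  have n4 := qfac_ne hq (j' + d)
  have n5 := qfac_ne hq d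
  have e1 : (1 : F) - q ^ (j' + 1 + d) = 1 - q ^ (j' + d + 1) := by
    rw [show j' + 1 + d = j' + d + 1 from by omega]
  rw [e1]
  field_simp
  ring

lemma key_coeff {N i : ℕ} (hi : 1 ≤ i) (hiN : i ≤ N) :
    ∑ j ∈ (Finset.Icc 1 i).filter (fun j => j % 2 = 1), 2 * (xq q j * Aco q N i j)
      = qbinom q N i * ((-1 : F) ^ (i + 1) * ∏ t ∈ Finset.range i, (1 + q ^ t)) * xq q i := by
  apply mul_left_cancel₀ (pow_ne_zero i hq0)
  have hcg : ∑ j ∈ (Finset.Icc 1 i).filter (fun j => j % 2 = 1),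
      q ^ i * (2 * (xq q j * Aco q N i j))
      = ∑ j ∈ (Finset.Icc 1 i).filter (fun j => j % 2 = 1),
        (-1 : F) ^ (i + 1) * qbinom q N i * xq q i
          * (2 * (q ^ (i + Nat.choose (i - j) 2) * qbinom q i j)) := by
    apply Finset.sum_congr rfl
    intro j hj
    rw [Finset.mem_filter, Finset.mem_Icc] at hj
    exact PT hq hq0 (by omega) hj.2 (by omega) hiN
  rw [Finset.mul_sum, hcg, ← Finset.mul_sum, ← Finset.mul_sum, heart hq hi]
  ring

omit hq hq0 in
lemma sum_swap_Icc {l N : ℕ} (g : ℕ → ℕ → F) :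
    ∑ k ∈ Finset.Icc l N, ∑ i ∈ Finset.Icc k N, g k i
      = ∑ i ∈ Finset.Icc l N, ∑ k ∈ Finset.Icc l i, g k i := by
  rw [Finset.sum_sigma', Finset.sum_sigma']
  apply Finset.sum_nbij' (i := fun p => ⟨p.2, p.1⟩) (j := fun p => ⟨p.2, p.1⟩)
  · intro p hp
    simp only [Finset.mem_sigma, Finset.mem_Icc] at hp ⊢
    omega
  · intro p hp
    simp only [Finset.mem_sigma, Finset.mem_Icc] at hp ⊢
    omega
  · intro p _
    rfl
  · intro p _
    rfl
  · intro p _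
    rfl

lemma HA {N : ℕ} : ∀ m l, 1 ≤ l → l ≤ N →
    chainSum q l N m = ∑ i ∈ Finset.Icc l N, Aco q N i l * xq q i ^ m := by
  intro m
  induction m with
  | zero =>
    intro l h1 h2
    rw [chainSum_zero]
    simp only [pow_zero, mul_one]
    exact (sumA hq hq0 h1 h2).symm
  | succ m ih =>
    intro l h1 h2
    rw [chainSum_succ]
    have hcg : ∑ k ∈ Finset.Icc l N, xq q k * chainSum q k N m
        = ∑ k ∈ Finset.Icc l N, ∑ i ∈ Finset.Icc k N, xq q k * (Aco q N i k * xq q i ^ m) := by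
      apply Finset.sum_congr rfl
      intro k hk
      rw [Finset.mem_Icc] at hk
      rw [ih k (by omega) hk.2, Finset.mul_sum]
    rw [hcg, sum_swap_Icc]
    apply Finset.sum_congr rfl
    intro i hi
    rw [Finset.mem_Icc] at hi
    have ht := tele hq hq0 hi.2 (by omega) (i - l) l (le_refl _) h1 hi.1
    calc ∑ k ∈ Finset.Icc l i, xq q k * (Aco q N i k * xq q i ^ m)
        = (∑ k ∈ Finset.Icc l i, xq q k * Aco q N i k) * xq q i ^ m := by
          rw [Finset.sum_mul]
          apply Finset.sum_congr rfl
          intros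
          ring
      _ = Aco q N i l * xq q i * xq q i ^ m := by rw [ht]
      _ = Aco q N i l * xq q i ^ (m + 1) := by rw [pow_succ]; ring

end P5

theorem fu_lascoux_eq14 (q : F) (m n : ℕ) (hm : 1 ≤ m) (hn : 1 ≤ n)
    (hq : ∀ i : ℕ, 1 ≤ i → q ^ i ≠ 1) :
    ∑ i ∈ Finset.Icc 1 (2 * n - 1),
        qbinom q (2 * n - 1) i * ((-1) ^ (i + 1) * ∏ j ∈ Finset.range i, (1 + q ^ j))
          * q ^ (m * i) / (1 - q ^ i) ^ m
      = ∑ i ∈ Finset.Icc 1 n,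
          2 * q ^ (2 * i - 1) / (1 - q ^ (2 * i - 1)) * chainSum q (2 * i - 1) (2 * n - 1) (m - 1) := by
  by_cases hq0 : q = 0
  · subst hq0
    trans (0 : F)
    · apply Finset.sum_eq_zero
      intro i hi
      rw [Finset.mem_Icc] at hi
      rw [zero_pow (Nat.mul_ne_zero (by omega) (by omega)), mul_zero, zero_div]
    · symm
      apply Finset.sum_eq_zero
      intro i hi
      rw [Finset.mem_Icc] at hi
      rw [zero_pow (show 2 * i - 1 ≠ 0 by omega), mul_zero, zero_div, zero_mul]
  obtain ⟨m', rfl⟩ : ∃ m', m = m' + 1 := ⟨m - 1, by omega⟩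
  set N := 2 * n - 1 with hN
  have hN1 : 1 ≤ N := by omega
  have step1 : ∀ i ∈ Finset.Icc 1 N,
      qbinom q N i * ((-1 : F) ^ (i + 1) * ∏ j ∈ Finset.range i, (1 + q ^ j))
          * q ^ ((m' + 1) * i) / (1 - q ^ i) ^ (m' + 1)
        = ∑ j ∈ (Finset.Icc 1 i).filter (fun j => j % 2 = 1),
            2 * (xq q j * Aco q N i j) * xq q i ^ m' := by
    intro i hi
    rw [Finset.mem_Icc] at hi
    have hx : xq q i ^ (m' + 1) = q ^ ((m' + 1) * i) / (1 - q ^ i) ^ (m' + 1) := by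
      rw [xq, div_pow, ← pow_mul, Nat.mul_comm]
    have hfac : qbinom q N i * ((-1 : F) ^ (i + 1) * ∏ j ∈ Finset.range i, (1 + q ^ j))
          * q ^ ((m' + 1) * i) / (1 - q ^ i) ^ (m' + 1)
        = (qbinom q N i * ((-1 : F) ^ (i + 1) * ∏ j ∈ Finset.range i, (1 + q ^ j)) * xq q i)
            * xq q i ^ m' := by
      rw [mul_div_assoc, ← hx, pow_succ]
      ring
    rw [hfac, ← key_coeff hq hq0 hi.1 hi.2, Finset.sum_mul]
  rw [Finset.sum_congr rfl step1]
  have step2 : ∀ i ∈ Finset.Icc 1 N,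
      ∑ j ∈ (Finset.Icc 1 i).filter (fun j => j % 2 = 1),
          2 * (xq q j * Aco q N i j) * xq q i ^ m'
        = ∑ j ∈ Finset.Icc 1 i,
            (if j % 2 = 1 then 2 * (xq q j * Aco q N i j) * xq q i ^ m' else 0) :=
    fun i _ => Finset.sum_filter _ _
  rw [Finset.sum_congr rfl step2, ← sum_swap_Icc]
  have step3 : ∀ j ∈ Finset.Icc 1 N,
      ∑ i ∈ Finset.Icc j N,
          (if j % 2 = 1 then 2 * (xq q j * Aco q N i j) * xq q i ^ m' else 0)
        = (if j % 2 = 1 then 2 * xq q j * chainSum q j N m' else 0) := by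
    intro j hj
    rw [Finset.mem_Icc] at hj
    by_cases hodd : j % 2 = 1
    · simp only [if_pos hodd]
      rw [HA hq hq0 m' j hj.1 hj.2, Finset.mul_sum]
      apply Finset.sum_congr rfl
      intros
      ring
    · simp only [if_neg hodd, Finset.sum_const_zero]
  rw [Finset.sum_congr rfl step3, ← Finset.sum_filter]
  have hfinal : ∑ j ∈ (Finset.Icc 1 N).filter (fun j => j % 2 = 1),
      2 * xq q j * chainSum q j N m'
      = ∑ i ∈ Finset.Icc 1 n,
          2 * q ^ (2 * i - 1) / (1 - q ^ (2 * i - 1)) * chainSum q (2 * i - 1) N m' := by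
    apply Finset.sum_nbij' (i := fun j => (j + 1) / 2) (j := fun i => 2 * i - 1)
    · intro a ha
      simp only [Finset.mem_filter, Finset.mem_Icc] at ha
      rw [Finset.mem_Icc]
      omega
    · intro a ha
      rw [Finset.mem_Icc] at ha
      simp only [Finset.mem_filter, Finset.mem_Icc]
      omega
    · intro a ha
      simp only [Finset.mem_filter, Finset.mem_Icc] at ha
      omega
    · intro a ha
      rw [Finset.mem_Icc] at ha
      omega
    · intro a ha
      simp only [Finset.mem_filter, Finset.mem_Icc] at ha
      rw [show 2 * ((a + 1) / 2) - 1 = a from by omega, xq, mul_div_assoc]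
  rw [hfinal]
  simp only [Nat.add_sub_cancel]
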